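/- Let b > 1, j,m ≥ 0 be integers, 0 < κ ≤ 1, and let X_{j+m} be a maximal (γ b^{-(j+m)})-net on the unit sphere S^{d-1} for some fixed γ > 0. Then for every x on the sphere, ∑_{η ∈ X_{j+m}} (1 + b^j ρ(x,η))^{-(d-1+κ)} ≤ c · b^{m(d-1)}, where c = c(d,b,γ)·κ^{-1}. -/

import Mathlib

open MeasureTheory Real

/-- Geodesic distance on the unit sphere `S^{d-1}`: `ρ(x,y) = arccos (x·y)`. -/
noncomputable def gdist {d : ℕ} (x y : Metric.sphere (0 : EuclideanSpace ℝ (Fin d)) 1) : ℝ :=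
  Real.arccos (inner ℝ (x : EuclideanSpace ℝ (Fin d)) (y : EuclideanSpace ℝ (Fin d)))

/-- The surface (Lebesgue) measure on `S^{d-1}`, realized as the `(d-1)`-dimensional
Hausdorff measure. -/
noncomputable def smeasure (d : ℕ) :
    Measure (Metric.sphere (0 : EuclideanSpace ℝ (Fin d)) 1) :=
  Measure.hausdorffMeasure ((d : ℝ) - 1)

/-- The spherical cap (geodesic ball) `B(η,r)` on `S^{d-1}`. -/
def sball {d : ℕ} (η : Metric.sphere (0 : EuclideanSpace ℝ (Fin d)) 1) (r : ℝ) :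
    Set (Metric.sphere (0 : EuclideanSpace ℝ (Fin d)) 1) :=
  {x | gdist η x < r}

/-- `Z` is a maximal `δ`-net on `S^{d-1}`: a finite set with pairwise geodesic distances
`≥ δ` whose geodesic `δ`-balls cover the sphere. -/
def IsMaximalNet {d : ℕ} (δ : ℝ) (Z : Finset (Metric.sphere (0 : EuclideanSpace ℝ (Fin d)) 1)) : Prop :=
  (∀ ζ₁ ∈ Z, ∀ ζ₂ ∈ Z, ζ₁ ≠ ζ₂ → δ ≤ gdist ζ₁ ζ₂) ∧
  (∀ x : Metric.sphere (0 : EuclideanSpace ℝ (Fin d)) 1, ∃ ζ ∈ Z, gdist ζ x < δ)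

/-!
Split the net into the dyadic shells `2^i ≤ 1 + b^j ρ(x, η) < 2^(i+1)`. The net is
`γ b^{-(j+m)}`-separated, so a volume-packing argument shows that the `i`-th shell, which lies
in a geodesic ball of radius `2^(i+1) b^{-j}`, has at most `C (2^i b^m)^(d-1)` points: finitely
many caps `⟪p, η⟫ ≥ 1/2` cover the sphere, and on each of them the orthogonal projection onto
`pᗮ ≅ ℝ^(d-1)` is bi-Lipschitz. Every point of the shell contributes at most `2^{-i(d-1+κ)}`,
so the shell contributes `O(b^{m(d-1)} 2^{-iκ})`, and the geometric series in `i` sums to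
`O(b^{m(d-1)} / κ)` because `1 - 2^{-κ} ≥ κ/2` for `κ ≤ 1`.
-/

open Finset Metric Module
open scoped RealInnerProductSpace

lemma pow_natLog_floor_le_and_lt_pow_succ {b i : ℕ} (hb : 1 < b) {y : ℝ} (hy : 1 ≤ y)
    (hi : Nat.log b ⌊y⌋₊ = i) :
    (b : ℝ) ^ i ≤ y ∧ y < (b : ℝ) ^ (i + 1) := by
  subst hi
  have h1 := Int.zpow_log_le_self hb (by linarith : 0 < y)
  have h2 := Int.lt_zpow_succ_log_self hb y
  rw [Int.log_of_one_le_right b hy] at h1 h2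
  exact ⟨by exact_mod_cast h1, by exact_mod_cast h2⟩

lemma sum_two_rpow_neg_pow_le (I : Finset ℕ) {κ : ℝ} (hκ : 0 < κ) (hκ1 : κ ≤ 1) :
    ∑ i ∈ I, ((2 : ℝ) ^ (-κ)) ^ i ≤ 2 / κ := by
  have hρ0 : 0 ≤ (2 : ℝ) ^ (-κ) := by positivity
  have bernoulli : (2 : ℝ) ^ (-κ) ≤ 1 - κ / 2 := by
    have := rpow_one_add_le_one_add_mul_self (s := -1 / 2) (by norm_num) hκ.le hκ1
    rw [Real.rpow_neg zero_le_two, ← Real.inv_rpow zero_le_two]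
    norm_num at this ⊢
    linarith
  have hρ1 : (2 : ℝ) ^ (-κ) < 1 := by linarith
  calc ∑ i ∈ I, ((2 : ℝ) ^ (-κ)) ^ i ≤ ∑' i, ((2 : ℝ) ^ (-κ)) ^ i :=
        (summable_geometric_of_lt_one hρ0 hρ1).sum_le_tsum _ fun i _ => pow_nonneg hρ0 i
    _ = (1 - (2 : ℝ) ^ (-κ))⁻¹ := tsum_geometric_of_lt_one hρ0 hρ1
    _ ≤ (κ / 2)⁻¹ := inv_anti₀ (by positivity) (by linarith)
    _ = 2 / κ := inv_div _ _

theorem sum_one_add_rpow_neg_le_of_card_filter_lt_le {ι : Type*} (Z : Finset ι) (t : ι → ℝ)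
    (ht : ∀ η ∈ Z, 0 ≤ t η) (n : ℕ) {κ A : ℝ} (hκ : 0 < κ) (hκ1 : κ ≤ 1)
    (hcount : ∀ R : ℝ, 1 ≤ R → (#{η ∈ Z | t η < R} : ℝ) ≤ A * R ^ n) :
    ∑ η ∈ Z, (1 + t η) ^ (-((n : ℝ) + κ)) ≤ 2 ^ (n + 1) * A / κ := by
  set ρ : ℝ := 2 ^ (-κ)
  have hA : 0 ≤ A := by simpa using (Nat.cast_nonneg _).trans (hcount 1 le_rfl)
  set shell : ι → ℕ := fun η => Nat.log 2 ⌊1 + t η⌋₊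
  have hfiber (i : ℕ) :
      ∑ η ∈ Z with shell η = i, (1 + t η) ^ (-((n : ℝ) + κ)) ≤ 2 ^ n * A * ρ ^ i := by
    have hmem : ∀ η ∈ {η ∈ Z | shell η = i},
        (2 : ℝ) ^ i ≤ 1 + t η ∧ 1 + t η < 2 ^ (i + 1) := fun η hη => by
      rw [mem_filter] at hη
      exact_mod_cast
        pow_natLog_floor_le_and_lt_pow_succ one_lt_two (by linarith [ht η hη.1]) hη.2
    have hsub : {η ∈ Z | shell η = i} ⊆ {η ∈ Z | t η < 2 ^ (i + 1)} := fun η hη =>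
      mem_filter.mpr ⟨(mem_filter.mp hη).1, by linarith [(hmem η hη).2]⟩
    have hterm : ∀ η ∈ {η ∈ Z | shell η = i},
        (1 + t η) ^ (-((n : ℝ) + κ)) ≤ ((2 : ℝ) ^ i) ^ (-((n : ℝ) + κ)) := fun η hη =>
      Real.rpow_le_rpow_of_nonpos (by positivity) (hmem η hη).1 (by linarith)
    calc ∑ η ∈ Z with shell η = i, (1 + t η) ^ (-((n : ℝ) + κ))
        ≤ #{η ∈ Z | shell η = i} * ((2 : ℝ) ^ i) ^ (-((n : ℝ) + κ)) := by
          simpa using sum_le_card_nsmul _ _ _ hterm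
      _ ≤ A * (2 ^ (i + 1)) ^ n * ((2 : ℝ) ^ i) ^ (-((n : ℝ) + κ)) := by
          gcongr
          exact (Nat.mono_cast (card_le_card hsub)).trans (hcount _ (one_le_pow₀ one_le_two))
      _ = 2 ^ n * A * (((2 : ℝ) ^ i) ^ (n : ℝ) * ((2 : ℝ) ^ i) ^ (-((n : ℝ) + κ))) := by
          rw [Real.rpow_natCast]; ring
      _ = 2 ^ n * A * ρ ^ i := by
          rw [← Real.rpow_add (by positivity), ← sub_eq_add_neg, sub_add_cancel_left,
            Real.rpow_pow_comm zero_le_two]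
  calc ∑ η ∈ Z, (1 + t η) ^ (-((n : ℝ) + κ))
      = ∑ i ∈ Z.image shell, ∑ η ∈ Z with shell η = i, (1 + t η) ^ (-((n : ℝ) + κ)) :=
        (sum_fiberwise_of_maps_to (fun η hη => mem_image_of_mem shell hη) _).symm
    _ ≤ ∑ i ∈ Z.image shell, 2 ^ n * A * ρ ^ i := sum_le_sum fun i _ => hfiber i
    _ ≤ 2 ^ n * A * (2 / κ) := by
        rw [← mul_sum]; gcongr; exact sum_two_rpow_neg_pow_le _ hκ hκ1
    _ = 2 ^ (n + 1) * A / κ := by ring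

theorem card_le_of_pairwise_le_dist {E : Type*} [NormedAddCommGroup E] [NormedSpace ℝ E]
    [FiniteDimensional ℝ E] {T : Finset E} {s R : ℝ} (hs : 0 < s) (hR : 0 ≤ R) {x₀ : E}
    (hsep : (T : Set E).Pairwise (s ≤ dist · ·)) (hT : ∀ a ∈ T, dist a x₀ ≤ R) :
    (#T : ℝ) ≤ (2 * R / s + 1) ^ finrank ℝ E := by
  let : MeasurableSpace E := borel E
  have : BorelSpace E := ⟨rfl⟩
  set μ : Measure E := Measure.addHaar
  have hdisj : (T : Set E).PairwiseDisjoint (ball · (s / 2)) := fun a ha c hc hac =>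
    ball_disjoint_ball (by linarith [hsep ha hc hac])
  have hsub : ∀ a ∈ T, ball a (s / 2) ⊆ ball x₀ (R + s / 2) := fun a ha =>
    ball_subset_ball' (by linarith [hT a ha])
  have hvol : (#T : ENNReal) * μ (ball 0 (s / 2)) ≤ μ (ball 0 (R + s / 2)) := by
    calc (#T : ENNReal) * μ (ball 0 (s / 2)) = μ (⋃ a ∈ T, ball a (s / 2)) := by
          rw [measure_biUnion_finset hdisj fun a _ => measurableSet_ball]
          simp [Measure.addHaar_ball_center]
      _ ≤ μ (ball x₀ (R + s / 2)) := measure_mono (Set.iUnion₂_subset hsub)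
      _ = μ (ball 0 (R + s / 2)) := Measure.addHaar_ball_center μ x₀ _
  rw [Measure.addHaar_ball_of_pos μ 0 (half_pos hs),
    Measure.addHaar_ball_of_pos μ 0 (by positivity : 0 < R + s / 2),
    ← mul_assoc, ENNReal.mul_le_mul_iff_left (measure_ball_pos μ 0 one_pos).ne'
      measure_ball_lt_top.ne, ← ENNReal.ofReal_natCast, ← ENNReal.ofReal_mul (by positivity),
    ENNReal.ofReal_le_ofReal_iff (by positivity)] at hvol
  calc (#T : ℝ) = #T * (s / 2) ^ finrank ℝ E / (s / 2) ^ finrank ℝ E := by field_simp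
    _ ≤ (R + s / 2) ^ finrank ℝ E / (s / 2) ^ finrank ℝ E := by gcongr
    _ = (2 * R / s + 1) ^ finrank ℝ E := by rw [← div_pow]; congr 1; field_simp

section Projection

variable {V : Type*} [NormedAddCommGroup V] [InnerProductSpace ℝ V] {p : V}

lemma coe_orthogonalProjectionOnto_orthogonal_singleton (hp : ‖p‖ = 1) (v : V) :
    ((ℝ ∙ p)ᗮ.orthogonalProjectionOnto v : V) = v - ⟪p, v⟫ • p := by
  simp [Submodule.orthogonalProjectionOnto_orthogonal, Submodule.starProjection_singleton, hp]

lemma norm_orthogonalProjectionOnto_orthogonal_singleton_sq (hp : ‖p‖ = 1) (v : V) :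
    ‖(ℝ ∙ p)ᗮ.orthogonalProjectionOnto v‖ ^ 2 = ‖v‖ ^ 2 - ⟪p, v⟫ ^ 2 := by
  rw [Submodule.coe_norm, coe_orthogonalProjectionOnto_orthogonal_singleton hp, norm_sub_sq_real,
    inner_smul_right, real_inner_comm, norm_smul, hp, mul_one, Real.norm_eq_abs, sq_abs]
  ring

lemma norm_sub_le_three_mul_dist_orthogonalProjectionOnto (hp : ‖p‖ = 1) {x y : V}
    (hx : ‖x‖ = 1) (hy : ‖y‖ = 1) (hpx : 1 / 2 ≤ ⟪p, x⟫) (hpy : 1 / 2 ≤ ⟪p, y⟫) :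
    ‖x - y‖ ≤ 3 * dist ((ℝ ∙ p)ᗮ.orthogonalProjectionOnto x)
      ((ℝ ∙ p)ᗮ.orthogonalProjectionOnto y) := by
  have hxy := norm_orthogonalProjectionOnto_orthogonal_singleton_sq hp (x - y)
  have hux := norm_orthogonalProjectionOnto_orthogonal_singleton_sq hp x
  have huy := norm_orthogonalProjectionOnto_orthogonal_singleton_sq hp y
  have hdiff := abs_norm_sub_norm_le ((ℝ ∙ p)ᗮ.orthogonalProjectionOnto y)
    ((ℝ ∙ p)ᗮ.orthogonalProjectionOnto x)
  rw [map_sub, inner_sub_right, ← dist_eq_norm] at hxy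
  rw [← dist_eq_norm, dist_comm] at hdiff
  rw [hx, one_pow] at hux
  rw [hy, one_pow] at huy
  set D := dist ((ℝ ∙ p)ᗮ.orthogonalProjectionOnto x) ((ℝ ∙ p)ᗮ.orthogonalProjectionOnto y)
  set u := ‖(ℝ ∙ p)ᗮ.orthogonalProjectionOnto x‖
  set v := ‖(ℝ ∙ p)ᗮ.orthogonalProjectionOnto y‖
  set a := ⟪p, x⟫
  set c := ⟪p, y⟫
  have hu : u ≤ 1 := by nlinarith [norm_nonneg ((ℝ ∙ p)ᗮ.orthogonalProjectionOnto x)]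
  have hv : v ≤ 1 := by nlinarith [norm_nonneg ((ℝ ∙ p)ᗮ.orthogonalProjectionOnto y)]
  -- `a² + u² = c² + v² = 1` lets the tangential gap `D` control the normal gap `a - c`
  have hac : (a - c) ^ 2 ≤ 4 * D ^ 2 :=
    calc (a - c) ^ 2 = (a - c) ^ 2 * 1 := by ring
      _ ≤ (a - c) ^ 2 * (a + c) ^ 2 := by gcongr; nlinarith
      _ = (v - u) ^ 2 * (v + u) ^ 2 := by
          rw [← mul_pow, ← mul_pow]; congr 1; linear_combination hux - huy
      _ ≤ D ^ 2 * 2 ^ 2 := by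
          have hsq := sq_le_sq' (abs_le.mp hdiff).1 (abs_le.mp hdiff).2
          have hsum : (v + u) ^ 2 ≤ 2 ^ 2 := pow_le_pow_left₀ (by positivity) (by linarith) 2
          exact mul_le_mul hsq hsum (by positivity) (by positivity)
      _ = 4 * D ^ 2 := by ring
  rw [← sq_le_sq₀ (norm_nonneg _) (by positivity)]
  nlinarith

end Projection

section Sphere

variable {d : ℕ}

local notation "𝔼" => EuclideanSpace ℝ (Fin d)
local notation "𝕊" => sphere (0 : 𝔼) 1

lemma gdist_nonneg (x y : 𝕊) : 0 ≤ gdist x y := arccos_nonneg _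

lemma dist_sq_eq_two_sub_two_mul_cos_gdist (x y : 𝕊) :
    dist x y ^ 2 = 2 - 2 * cos (gdist x y) := by
  have hx := norm_eq_of_mem_sphere x
  have hy := norm_eq_of_mem_sphere y
  have hinner := abs_le.mp (abs_real_inner_le_norm (x : 𝔼) y)
  rw [hx, hy, mul_one] at hinner
  rw [gdist, cos_arccos hinner.1 hinner.2, Subtype.dist_eq, dist_eq_norm, norm_sub_sq_real, hx, hy]
  ring

lemma dist_le_gdist (x y : 𝕊) : dist x y ≤ gdist x y := by
  rw [← sq_le_sq₀ dist_nonneg (gdist_nonneg x y), dist_sq_eq_two_sub_two_mul_cos_gdist]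
  linarith [one_sub_sq_div_two_le_cos (x := gdist x y)]

lemma gdist_le_two_mul_dist (x y : 𝕊) : gdist x y ≤ 2 * dist x y := by
  have h0 := gdist_nonneg x y
  have hcos := cos_le_one_sub_mul_cos_sq (x := gdist x y)
    (abs_le.mpr ⟨by linarith [pi_pos], arccos_le_pi _⟩)
  have hπ : 1 / 8 ≤ 2 / π ^ 2 := by
    rw [div_le_div_iff₀ (by norm_num) (by positivity)]
    nlinarith [pi_pos, pi_le_four]
  rw [← sq_le_sq₀ h0 (by positivity), mul_pow, dist_sq_eq_two_sub_two_mul_cos_gdist]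
  nlinarith [sq_nonneg (gdist x y)]

lemma exists_finset_forall_exists_one_half_le_inner :
    ∃ P : Finset 𝕊, ∀ x : 𝕊, ∃ p ∈ P, 1 / 2 ≤ ⟪(p : 𝔼), x⟫ := by
  obtain ⟨P, hP⟩ := isCompact_univ.elim_finite_subcover
    (fun p : 𝕊 => {x : 𝕊 | 1 / 2 < ⟪(p : 𝔼), x⟫})
    (fun p => isOpen_lt continuous_const (continuous_const.inner continuous_subtype_val))
    (fun x _ => Set.mem_iUnion.mpr ⟨x, by norm_num [norm_eq_of_mem_sphere]⟩)
  refine ⟨P, fun x => ?_⟩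
  obtain ⟨p, hp, hpx⟩ := Set.mem_iUnion₂.mp (hP (Set.mem_univ x))
  exact ⟨p, hp, hpx.le⟩

lemma card_le_of_forall_one_half_le_inner (hd : 1 ≤ d) (p : 𝕊) {T : Finset 𝕊}
    (hTp : ∀ η ∈ T, 1 / 2 ≤ ⟪(p : 𝔼), η⟫) {s r : ℝ} (hs : 0 < s)
    (hr : 0 ≤ r) {x : 𝕊} (hsep : (T : Set 𝕊).Pairwise (s ≤ dist · ·))
    (hT : ∀ η ∈ T, dist η x ≤ r) :
    (#T : ℝ) ≤ (6 * r / s + 1) ^ (d - 1) := by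
  have : Fact (finrank ℝ 𝔼 = (d - 1) + 1) := ⟨by simp; omega⟩
  have hp := norm_eq_of_mem_sphere p
  set f : 𝕊 → (ℝ ∙ (p : 𝔼))ᗮ := fun z => (ℝ ∙ (p : 𝔼))ᗮ.orthogonalProjectionOnto z
  have hexpand : ∀ a ∈ T, ∀ c ∈ T, dist a c ≤ 3 * dist (f a) (f c) := fun a ha c hc => by
    rw [Subtype.dist_eq, dist_eq_norm]
    exact norm_sub_le_three_mul_dist_orthogonalProjectionOnto hp (norm_eq_of_mem_sphere a)
      (norm_eq_of_mem_sphere c) (hTp a ha) (hTp c hc)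
  have hsep' : (T : Set 𝕊).Pairwise fun a c => s / 3 ≤ dist (f a) (f c) := fun a ha c hc hac => by
    linarith [hsep ha hc hac, hexpand a ha c hc]
  have hinj : Set.InjOn f T := fun a ha c hc hac => by
    by_contra hne
    linarith [hsep' ha hc hne, dist_eq_zero.mpr hac]
  have hcontract : ∀ η ∈ T, dist (f η) (f x) ≤ r := fun η hη =>
    ((Submodule.lipschitzWith_orthogonalProjectionOnto _).dist_le_mul (η : 𝔼) x).trans
      (by simpa [← Subtype.dist_eq] using hT η hη)
  have hcount := card_le_of_pairwise_le_dist (T := T.image f) (by positivity : 0 < s / 3) hr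
    (x₀ := f x) (by rwa [coe_image, hinj.pairwise_image])
    (forall_mem_image.mpr hcontract)
  rw [card_image_of_injOn hinj, Submodule.finrank_orthogonal_span_singleton (n := d - 1)
    (ne_zero_of_mem_unit_sphere p)] at hcount
  convert hcount using 3
  field_simp
  ring

theorem exists_card_le_of_pairwise_le_gdist (hd : 1 ≤ d) :
    ∃ C : ℝ, 0 < C ∧ ∀ (T : Finset 𝕊) (x : 𝕊) {s r : ℝ}, 0 < s → 0 ≤ r →
      (T : Set 𝕊).Pairwise (s ≤ gdist · ·) → (∀ η ∈ T, gdist x η < r) →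
      (#T : ℝ) ≤ C * (r / s + 1) ^ (d - 1) := by
  obtain ⟨P, hP⟩ := exists_finset_forall_exists_one_half_le_inner (d := d)
  refine ⟨(#P + 1) * 12 ^ (d - 1), by positivity, fun T x s r hs hr hsep hT => ?_⟩
  set cap : 𝕊 → Finset 𝕊 := fun p => {η ∈ T | 1 / 2 ≤ ⟪(p : 𝔼), η⟫}
  have hcover : T ⊆ P.biUnion cap := fun η hη => by
    obtain ⟨p, hp, hpη⟩ := hP η
    exact mem_biUnion.mpr ⟨p, hp, mem_filter.mpr ⟨hη, hpη⟩⟩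
  have hcap : ∀ p ∈ P, (#(cap p) : ℝ) ≤ 12 ^ (d - 1) * (r / s + 1) ^ (d - 1) := fun p _ =>
    calc (#(cap p) : ℝ) ≤ (6 * r / (s / 2) + 1) ^ (d - 1) :=
          card_le_of_forall_one_half_le_inner hd p (fun η hη => (mem_filter.mp hη).2)
            (half_pos hs) hr
            ((hsep.mono (coe_subset.mpr (filter_subset _ _))).mono' fun a c h => by
              linarith [gdist_le_two_mul_dist a c])
            (fun η hη => by
              rw [dist_comm]
              exact (dist_le_gdist x η).trans (hT η (mem_filter.mp hη).1).le)
      _ ≤ (12 * (r / s + 1)) ^ (d - 1) := by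
          have : 6 * r / (s / 2) = 12 * (r / s) := by field_simp; ring
          gcongr
          linarith
      _ = 12 ^ (d - 1) * (r / s + 1) ^ (d - 1) := mul_pow _ _ _
  calc (#T : ℝ) ≤ ∑ p ∈ P, (#(cap p) : ℝ) := by
        exact_mod_cast (card_le_card hcover).trans card_biUnion_le
    _ ≤ #P * (12 ^ (d - 1) * (r / s + 1) ^ (d - 1)) := by
        simpa using sum_le_card_nsmul P _ _ hcap
    _ ≤ (#P + 1) * 12 ^ (d - 1) * (r / s + 1) ^ (d - 1) := by
        rw [← mul_assoc]; gcongr; linarith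

theorem exists_card_filter_mul_gdist_lt_le (hd : 1 ≤ d) {b γ : ℝ} (hb : 1 < b) (hγ : 0 < γ) :
    ∃ A : ℝ, 0 < A ∧ ∀ (j m : ℕ) (Z : Finset 𝕊),
      (Z : Set 𝕊).Pairwise (γ / b ^ (j + m) ≤ gdist · ·) → ∀ (x : 𝕊) (R : ℝ), 1 ≤ R →
        (#{η ∈ Z | b ^ j * gdist x η < R} : ℝ) ≤ A * b ^ (m * (d - 1)) * R ^ (d - 1) := by
  obtain ⟨C, hC, hcount⟩ := exists_card_le_of_pairwise_le_gdist hd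
  refine ⟨C * (γ⁻¹ + 1) ^ (d - 1), by positivity, fun j m Z hZ x R hR => ?_⟩
  have hbj : 0 < b ^ j := pow_pos (by linarith) j
  have hbmR : 1 ≤ b ^ m * R := one_le_mul_of_one_le_of_one_le (one_le_pow₀ hb.le) hR
  have hratio : R / b ^ j / (γ / b ^ (j + m)) = γ⁻¹ * (b ^ m * R) := by
    rw [pow_add]; field_simp
  calc (#{η ∈ Z | b ^ j * gdist x η < R} : ℝ)
      ≤ C * (R / b ^ j / (γ / b ^ (j + m)) + 1) ^ (d - 1) :=
        hcount _ x (by positivity) (by positivity)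
          (hZ.mono (coe_subset.mpr (filter_subset _ _)))
          fun η hη => by rw [lt_div_iff₀' hbj]; exact (mem_filter.mp hη).2
    _ ≤ C * ((γ⁻¹ + 1) * b ^ m * R) ^ (d - 1) := by
        gcongr
        rw [hratio]
        linarith [show (γ⁻¹ + 1) * b ^ m * R = γ⁻¹ * (b ^ m * R) + b ^ m * R by ring]
    _ = C * (γ⁻¹ + 1) ^ (d - 1) * b ^ (m * (d - 1)) * R ^ (d - 1) := by
        rw [mul_pow, mul_pow, ← pow_mul]; ring

end Sphere

/-- For `b > 1`, `γ > 0`, `0 < κ ≤ 1`, integers `j, m ≥ 0`, any maximal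
`γ b^{-(j+m)}`-net `Z` on `S^{d-1}`, and any `x ∈ S^{d-1}`:
`∑_{η ∈ Z} (1 + b^j ρ(x,η))^{-(d-1+κ)} ≤ c κ⁻¹ b^{m(d-1)}` with `c = c(d,b,γ)`. -/
theorem sum_over_net_bound (d : ℕ) (hd : 2 ≤ d) (b γ : ℝ) (hb : 1 < b) (hγ : 0 < γ) :
    ∃ c : ℝ, 0 < c ∧
      ∀ κ : ℝ, 0 < κ → κ ≤ 1 → ∀ j m : ℕ,
        ∀ Z : Finset (Metric.sphere (0 : EuclideanSpace ℝ (Fin d)) 1),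
          IsMaximalNet (γ / b ^ (j + m)) Z →
          ∀ x : Metric.sphere (0 : EuclideanSpace ℝ (Fin d)) 1,
            ∑ η ∈ Z, (1 + b ^ j * gdist x η) ^ (-((d : ℝ) - 1 + κ))
              ≤ (c / κ) * b ^ (m * (d - 1)) := by
  obtain ⟨A, hA, hcount⟩ := exists_card_filter_mul_gdist_lt_le (d := d) (by omega) hb hγ
  refine ⟨2 ^ d * A, by positivity, fun κ hκ hκ1 j m Z hZ x => ?_⟩
  rw [show (d : ℝ) - 1 = (d - 1 : ℕ) by rw [Nat.cast_sub (by omega), Nat.cast_one]]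
  calc ∑ η ∈ Z, (1 + b ^ j * gdist x η) ^ (-(((d - 1 : ℕ) : ℝ) + κ))
      ≤ 2 ^ (d - 1 + 1) * (A * b ^ (m * (d - 1))) / κ :=
        sum_one_add_rpow_neg_le_of_card_filter_lt_le Z _
          (fun η _ => mul_nonneg (pow_nonneg (by linarith) j) (gdist_nonneg x η)) (d - 1)
          hκ hκ1 (hcount j m Z hZ.1 x)
    _ = 2 ^ d * A / κ * b ^ (m * (d - 1)) := by
        rw [Nat.sub_add_cancel (by omega)]; ring
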